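/- arXiv:2304.00068 — 2 statements merged into one kernel-verified Lean document; each statement's English description precedes it below -/
import Mathlib

section
/- If a discrete net A over a metric space L satisfies weak algebraic Haag duality with duality constants R and D, and α : A → B is a *-isomorphism of quasi-local algebras with spread at most T, then B satisfies weak algebraic Haag duality with constants R and D + 2T. -/
/-- A discrete net of C*-algebras over a metric space `L`: an assignment of unital
C*-subalgebras of a quasi-local algebra `A` to subsets of `L`, monotone, with commuting
algebras for disjoint regions, generated by the algebras of finite subsets, and with
dense union of local algebras. -/
structure CStarNet (L : Type*) [MetricSpace L] (A : Type*)
    [NormedRing A] [StarRing A] [CStarRing A] [NormedAlgebra ℂ A] [StarModule ℂ A] where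
  alg : Set L → StarSubalgebra ℂ A
  mono : ∀ {F G : Set L}, F ⊆ G → alg F ≤ alg G
  commutes : ∀ {F G : Set L}, Disjoint F G → ∀ x ∈ alg F, ∀ y ∈ alg G, x * y = y * x
  generated : ∀ M : Set L, alg M = ⨆ (F : Finset L) (_ : ↑F ⊆ M), alg ↑F
  dense_union : Dense (⋃ F : Finset L, (alg ↑F : Set A))

/-- The `T`-neighborhood of a set in a metric space. -/
def rNbhd {L : Type*} [MetricSpace L] (T : ℝ) (F : Set L) : Set L :=
  {x : L | ∃ y ∈ F, dist x y ≤ T}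

/-- Weak algebraic Haag duality with duality constants `R`, `D`: for every ball `F` of
radius `U ≥ R` about a point `x`, the centralizer of `A_{F^c}` in `A` is contained in the
local algebra of the ball of radius `U + D` about `x`. -/
def WeakHaagDuality {L : Type*} [MetricSpace L] {A : Type*}
    [NormedRing A] [StarRing A] [CStarRing A] [NormedAlgebra ℂ A] [StarModule ℂ A]
    (N : CStarNet L A) (R D : ℝ) : Prop :=
  ∀ (x : L) (U : ℝ), R ≤ U →
    Set.centralizer ((N.alg (Metric.closedBall x U)ᶜ : StarSubalgebra ℂ A) : Set A) ⊆
      ((N.alg (Metric.closedBall x (U + D)) : StarSubalgebra ℂ A) : Set A)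

/-- A ⋆-isomorphism of quasi-local algebras has spread at most `T` if it and its inverse
map operators localized in a finite region `F` into the `T`-neighborhood of `F`. -/
def HasSpread {L : Type*} [MetricSpace L] {A B : Type*}
    [NormedRing A] [StarRing A] [CStarRing A] [NormedAlgebra ℂ A] [StarModule ℂ A]
    [NormedRing B] [StarRing B] [CStarRing B] [NormedAlgebra ℂ B] [StarModule ℂ B]
    (NA : CStarNet L A) (NB : CStarNet L B) (α : A ≃⋆ₐ[ℂ] B) (T : ℝ) : Prop :=
  ∀ F : Finset L,
    (∀ x ∈ NA.alg ↑F, α x ∈ NB.alg (rNbhd T ↑F)) ∧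
    (∀ y ∈ NB.alg ↑F, α.symm y ∈ NA.alg (rNbhd T ↑F))

/-!
Pull a centralizer element `b` back to `a = α⁻¹ b`. Spread at most `T` sends the outside of
the ball of radius `U + T` into the outside of the ball of radius `U`, so `a` commutes with
everything localized outside the larger ball, and Haag duality for `A` localizes `a` in the
ball of radius `U + T + D`. Pushing forward along `α` costs another `T`.
-/

open Metric

lemma MulEquiv.symm_mem_centralizer {A B : Type*} [Mul A] [Mul B] (e : A ≃* B)
    {S : Set A} {S' : Set B} (hS : ∀ z ∈ S, e z ∈ S') {b : B} (hb : b ∈ Set.centralizer S') :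
    e.symm b ∈ Set.centralizer S := by
  intro z hz
  apply e.injective
  simpa only [map_mul, MulEquiv.apply_symm_apply] using hb (e z) (hS z hz)

section rNbhd

variable {L : Type*} [MetricSpace L]

lemma rNbhd_mono (T : ℝ) {F G : Set L} (h : F ⊆ G) : rNbhd T F ⊆ rNbhd T G :=
  fun _ ⟨y, hy, hxy⟩ => ⟨y, h hy, hxy⟩

lemma rNbhd_closedBall_subset (T : ℝ) (x : L) (r : ℝ) :
    rNbhd T (closedBall x r) ⊆ closedBall x (r + T) := by
  rintro z ⟨w, hw, hzw⟩
  rw [mem_closedBall] at hw ⊢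
  linarith [dist_triangle z w x]

lemma rNbhd_compl_closedBall_subset (T : ℝ) (x : L) (r : ℝ) :
    rNbhd T (closedBall x (r + T))ᶜ ⊆ (closedBall x r)ᶜ := by
  rintro z ⟨w, hw, hzw⟩
  simp only [Set.mem_compl_iff, mem_closedBall, not_le] at hw ⊢
  linarith [dist_triangle w z x, dist_comm w z]

end rNbhd

section Net

variable {L : Type*} [MetricSpace L] {A B : Type*}
    [NormedRing A] [StarRing A] [CStarRing A] [NormedAlgebra ℂ A] [StarModule ℂ A]
    [NormedRing B] [StarRing B] [CStarRing B] [NormedAlgebra ℂ B] [StarModule ℂ B]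

lemma CStarNet.alg_le_of_forall_finset (N : CStarNet L A) {M : Set L} {S : StarSubalgebra ℂ A}
    (h : ∀ F : Finset L, ↑F ⊆ M → N.alg ↑F ≤ S) : N.alg M ≤ S := by
  rw [N.generated M]
  exact iSup₂_le h

lemma HasSpread.apply_mem {NA : CStarNet L A} {NB : CStarNet L B} {α : A ≃⋆ₐ[ℂ] B} {T : ℝ}
    (hα : HasSpread NA NB α T) {M : Set L} {a : A} (ha : a ∈ NA.alg M) :
    α a ∈ NB.alg (rNbhd T M) := by
  have hle : NA.alg M ≤ (NB.alg (rNbhd T M)).comap (α : A →⋆ₐ[ℂ] B) :=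
    NA.alg_le_of_forall_finset fun F hF z hz => NB.mono (rNbhd_mono T hF) ((hα F).1 z hz)
  exact hle ha

end Net

theorem weakHaagDuality_of_hasSpread_general
    {L : Type*} [MetricSpace L] {A B : Type*}
    [NormedRing A] [StarRing A] [CStarRing A] [NormedAlgebra ℂ A] [StarModule ℂ A]
    [NormedRing B] [StarRing B] [CStarRing B] [NormedAlgebra ℂ B] [StarModule ℂ B]
    (NA : CStarNet L A) (NB : CStarNet L B) (R D T : ℝ)
    (hT : 0 ≤ T)
    (hHaag : WeakHaagDuality NA R D)
    (α : A ≃⋆ₐ[ℂ] B) (hα : HasSpread NA NB α T) :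
    WeakHaagDuality NB R (D + 2 * T) := by
  intro x U hU b hb
  have hcomm : α.symm b ∈ Set.centralizer
      ((NA.alg (closedBall x (U + T))ᶜ : StarSubalgebra ℂ A) : Set A) :=
    (α : A ≃* B).symm_mem_centralizer
      (fun z hz => NB.mono (rNbhd_compl_closedBall_subset T x U) (hα.apply_mem hz)) hb
  have hloc : α.symm b ∈ NA.alg (closedBall x (U + T + D)) :=
    hHaag x (U + T) (by linarith) hcomm
  have hb' := NB.mono (rNbhd_closedBall_subset T x _) (hα.apply_mem hloc)
  rwa [StarAlgEquiv.apply_symm_apply, show U + T + D + T = U + (D + 2 * T) by ring] at hb'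

/-- Weak algebraic Haag duality is preserved under bounded spread isomorphism: if `A`
satisfies weak algebraic Haag duality with constants `R`, `D` and `α : A → B` is a
⋆-isomorphism of quasi-local algebras with spread at most `T`, then `B` satisfies weak
algebraic Haag duality with constants `R` and `D + 2T`. -/
theorem weakHaagDuality_of_hasSpread
    {L : Type*} [MetricSpace L] {A B : Type*}
    [NormedRing A] [StarRing A] [CStarRing A] [NormedAlgebra ℂ A] [StarModule ℂ A]
    [NormedRing B] [StarRing B] [CStarRing B] [NormedAlgebra ℂ B] [StarModule ℂ B]
    (NA : CStarNet L A) (NB : CStarNet L B) (R D T : ℝ)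
    (hR : 0 ≤ R) (hD : 0 ≤ D) (hT : 0 ≤ T)
    (hHaag : WeakHaagDuality NA R D)
    (α : A ≃⋆ₐ[ℂ] B) (hα : HasSpread NA NB α T) :
    WeakHaagDuality NB R (D + 2 * T) :=
  weakHaagDuality_of_hasSpread_general NA NB R D T hT hHaag α hα
end

section
/- Suppose a discrete net A satisfies weak algebraic Haag duality with constants R, D. Let F be a ball of radius U ≥ R about x ∈ L, let {b_i} be a projective basis of an A-A correspondence X satisfying a b_i = b_i a for all a ∈ A_{F^c}, and let G be the ball of radius U + D about x. Then for every a ∈ A_F and all i, j, the inner product ⟨b_i | a b_j⟩ lies in A_G. -/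
/-- An `A`-`A` correspondence: a right Hilbert `A`-module with a commuting left action
of `A` by adjointable operators, presented algebraically. -/
structure Corr (A : Type*)
    [NormedRing A] [StarRing A] [CStarRing A] [NormedAlgebra ℂ A] [StarModule ℂ A]
    (X : Type*) [NormedAddCommGroup X] [NormedSpace ℂ X] where
  lsmul : A → X → X
  rsmul : X → A → X
  inner : X → X → A
  lsmul_add : ∀ a x y, lsmul a (x + y) = lsmul a x + lsmul a y
  add_lsmul : ∀ a b x, lsmul (a + b) x = lsmul a x + lsmul b x
  lsmul_mul : ∀ a b x, lsmul (a * b) x = lsmul a (lsmul b x)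
  one_lsmul : ∀ x, lsmul 1 x = x
  rsmul_add : ∀ x y a, rsmul (x + y) a = rsmul x a + rsmul y a
  rsmul_add' : ∀ x a b, rsmul x (a + b) = rsmul x a + rsmul x b
  rsmul_mul : ∀ x a b, rsmul x (a * b) = rsmul (rsmul x a) b
  rsmul_one : ∀ x, rsmul x 1 = x
  lsmul_rsmul : ∀ a x b, rsmul (lsmul a x) b = lsmul a (rsmul x b)
  inner_add_right : ∀ x y z, inner x (y + z) = inner x y + inner x z
  inner_rsmul_right : ∀ x y a, inner x (rsmul y a) = inner x y * a
  inner_star : ∀ x y, star (inner x y) = inner y x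
  inner_lsmul : ∀ a x y, inner (lsmul a x) y = inner x (lsmul (star a) y)
  norm_inner_self : ∀ x, ‖inner x x‖ = ‖x‖ ^ 2
  continuous_inner_right : ∀ x, Continuous (inner x)
  continuous_rsmul_right : ∀ x, Continuous (rsmul x)
  continuous_lsmul_right : ∀ a, Continuous (lsmul a)

/-- A finite family is a projective basis for a correspondence if the reproducing
formula `∑ i, b i ⬝ ⟪b i, x⟫ = x` holds for every `x`. -/
def Corr.IsProjBasis {A : Type*}
    [NormedRing A] [StarRing A] [CStarRing A] [NormedAlgebra ℂ A] [StarModule ℂ A]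
    {X : Type*} [NormedAddCommGroup X] [NormedSpace ℂ X]
    (ρ : Corr A X) {ι : Type*} [Fintype ι] (b : ι → X) : Prop :=
  ∀ x : X, ∑ i, ρ.rsmul (b i) (ρ.inner (b i) x) = x

/-- A realization of the relative tensor product `X ⊠_A Y` as a correspondence `Z`:
a balanced bilinear map `t : X → Y → Z` with the characteristic inner product formula
`⟪x₁ ⊠ y₁, x₂ ⊠ y₂⟫ = ⟪y₁, ⟪x₁, x₂⟫ ▷ y₂⟫` and total (dense) image. -/
structure RelTensor {A : Type*}
    [NormedRing A] [StarRing A] [CStarRing A] [NormedAlgebra ℂ A] [StarModule ℂ A]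
    {X Y Z : Type*} [NormedAddCommGroup X] [NormedSpace ℂ X]
    [NormedAddCommGroup Y] [NormedSpace ℂ Y] [NormedAddCommGroup Z] [NormedSpace ℂ Z]
    (ρX : Corr A X) (ρY : Corr A Y) (ρZ : Corr A Z) where
  t : X → Y → Z
  add_left : ∀ x x' y, t (x + x') y = t x y + t x' y
  add_right : ∀ x y y', t x (y + y') = t x y + t x y'
  balanced : ∀ x a y, t (ρX.rsmul x a) y = t x (ρY.lsmul a y)
  rsmul_t : ∀ x y a, ρZ.rsmul (t x y) a = t x (ρY.rsmul y a)
  lsmul_t : ∀ a x y, ρZ.lsmul a (t x y) = t (ρX.lsmul a x) y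
  inner_t : ∀ x₁ y₁ x₂ y₂,
    ρZ.inner (t x₁ y₁) (t x₂ y₂) = ρY.inner y₁ (ρY.lsmul (ρX.inner x₁ x₂) y₂)
  dense_span : Dense ((Submodule.span ℂ {z : Z | ∃ x y, z = t x y} : Submodule ℂ Z) : Set Z)

/-- A projective basis of a correspondence over the quasi-local algebra of a net is
localized in a region `F` if each basis vector commutes with every operator localized in
the complement of `F`. -/
def Corr.BasisLocalizedIn {L : Type*} [MetricSpace L] {A : Type*}
    [NormedRing A] [StarRing A] [CStarRing A] [NormedAlgebra ℂ A] [StarModule ℂ A]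
    {X : Type*} [NormedAddCommGroup X] [NormedSpace ℂ X]
    (N : CStarNet L A) (ρ : Corr A X) {ι : Type*} (b : ι → X) (F : Set L) : Prop :=
  ∀ i, ∀ a ∈ N.alg Fᶜ, ρ.lsmul a (b i) = ρ.rsmul (b i) a

/-!
An element `c` of `A_{Fᶜ}` moves through `⟪b i, a ▷ b j⟫` from one side to the other: on the
right it enters the left action through `b j` (which is localized in `F`), on the left it
enters through `b i` via the adjoint, and in between it commutes with `a ∈ A_F` by locality
of the net. So the inner product lies in the centralizer of `A_{Fᶜ}`, which weak algebraic
Haag duality places in `A_G`.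
-/

namespace Corr

variable {A : Type*} [NormedRing A] [StarRing A] [CStarRing A] [NormedAlgebra ℂ A]
  [StarModule ℂ A] {X : Type*} [NormedAddCommGroup X] [NormedSpace ℂ X] (ρ : Corr A X)

theorem inner_lsmul_mul_of_lsmul_eq_rsmul {c : A} {y : X} (hy : ρ.lsmul c y = ρ.rsmul y c)
    (x : X) (a : A) : ρ.inner x (ρ.lsmul a y) * c = ρ.inner x (ρ.lsmul (a * c) y) := by
  rw [← ρ.inner_rsmul_right, ρ.lsmul_rsmul, ← hy, ← ρ.lsmul_mul]

theorem mul_inner_lsmul_of_lsmul_star_eq_rsmul {c : A} {x : X}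
    (hx : ρ.lsmul (star c) x = ρ.rsmul x (star c)) (y : X) (a : A) :
    c * ρ.inner x (ρ.lsmul a y) = ρ.inner x (ρ.lsmul (c * a) y) := by
  calc c * ρ.inner x (ρ.lsmul a y)
      = star (ρ.inner (ρ.lsmul a y) x * star c) := by
        rw [star_mul, star_star, ρ.inner_star]
    _ = ρ.inner x (ρ.lsmul (c * a) y) := by
        rw [← ρ.inner_rsmul_right, ← hx, ρ.inner_star, ρ.inner_lsmul, star_star, ← ρ.lsmul_mul]

theorem inner_lsmul_mem_centralizer {S : StarSubalgebra ℂ A} {x y : X}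
    (hx : ∀ c ∈ S, ρ.lsmul c x = ρ.rsmul x c) (hy : ∀ c ∈ S, ρ.lsmul c y = ρ.rsmul y c)
    {a : A} (ha : a ∈ Set.centralizer (S : Set A)) :
    ρ.inner x (ρ.lsmul a y) ∈ Set.centralizer (S : Set A) := by
  intro c hc
  rw [ρ.inner_lsmul_mul_of_lsmul_eq_rsmul (hy c hc),
    ρ.mul_inner_lsmul_of_lsmul_star_eq_rsmul (hx (star c) (star_mem hc)), ha c hc]

end Corr

theorem CStarNet.mem_centralizer_alg_compl {L : Type*} [MetricSpace L] {A : Type*}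
    [NormedRing A] [StarRing A] [CStarRing A] [NormedAlgebra ℂ A] [StarModule ℂ A]
    (N : CStarNet L A) {F : Set L} {a : A} (ha : a ∈ N.alg F) :
    a ∈ Set.centralizer (N.alg Fᶜ : Set A) :=
  fun c hc => (N.commutes disjoint_compl_right a ha c hc).symm

theorem inner_localized_of_weakHaagDuality_general
    {L : Type*} [MetricSpace L] {A : Type*}
    [NormedRing A] [StarRing A] [CStarRing A] [NormedAlgebra ℂ A] [StarModule ℂ A]
    {X : Type*} [NormedAddCommGroup X] [NormedSpace ℂ X]
    (N : CStarNet L A) (R D : ℝ) (hHaag : WeakHaagDuality N R D)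
    (ρ : Corr A X) (x₀ : L) (U : ℝ) (hU : R ≤ U)
    {n : ℕ} (b : Fin n → X)
    (hloc : Corr.BasisLocalizedIn N ρ b (Metric.closedBall x₀ U)) :
    ∀ a ∈ N.alg (Metric.closedBall x₀ U), ∀ i j,
      ρ.inner (b i) (ρ.lsmul a (b j)) ∈ N.alg (Metric.closedBall x₀ (U + D)) :=
  fun _ ha i j => hHaag x₀ U hU
    (ρ.inner_lsmul_mem_centralizer (hloc i) (hloc j) (N.mem_centralizer_alg_compl ha))

/-- Under weak algebraic Haag duality with constants `R`, `D`, if `{b i}` is a projective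
basis of a correspondence `X` localized in the ball `F` of radius `U ≥ R` about `x₀`,
then for every `a ∈ A_F` the inner products `⟪b i, a ▷ b j⟫` lie in the local algebra of
the ball of radius `U + D` about `x₀`. -/
theorem inner_localized_of_weakHaagDuality
    {L : Type*} [MetricSpace L] {A : Type*}
    [NormedRing A] [StarRing A] [CStarRing A] [NormedAlgebra ℂ A] [StarModule ℂ A]
    {X : Type*} [NormedAddCommGroup X] [NormedSpace ℂ X]
    (N : CStarNet L A) (R D : ℝ) (hHaag : WeakHaagDuality N R D)
    (ρ : Corr A X) (x₀ : L) (U : ℝ) (hU : R ≤ U)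
    {n : ℕ} (b : Fin n → X) (hbasis : ρ.IsProjBasis b)
    (hloc : Corr.BasisLocalizedIn N ρ b (Metric.closedBall x₀ U)) :
    ∀ a ∈ N.alg (Metric.closedBall x₀ U), ∀ i j,
      ρ.inner (b i) (ρ.lsmul a (b j)) ∈ N.alg (Metric.closedBall x₀ (U + D)) :=
  inner_localized_of_weakHaagDuality_general N R D hHaag ρ x₀ U hU b hloc
end
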